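/- Let R be a commutative ring, x ∈ R a non-zero divisor, A an R-algebra, and M a left A-module that is projective over R. Then the canonical map End_A(M) ⊗_R R/(x) → Hom_A(M, R/(x) ⊗_R M), sending f ⊗ (r + (x)) to the map m ↦ (r + (x)) ⊗ f(m), is injective. -/

import Mathlib

open TensorProduct

section BaseChangeAction

variable {R S A M : Type} [CommRing R] [CommRing S] [Algebra R S] [Ring A] [Algebra R A]
variable [AddCommGroup M] [Module A M] [Module R M] [IsScalarTower R A M]
variable [SMulCommClass A R M]

/-- The action of `a : A` on the second factor of `S ⊗[R] M`. -/
noncomputable def secondFactorSMul (a : A) : S ⊗[R] M →ₗ[R] S ⊗[R] M :=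
  LinearMap.lTensor S (Module.toModuleEnd R M a)

/-- `S ⊗[R] M` is a left `A`-module via the action of `A` on the second factor. -/
noncomputable instance (priority := 50) moduleBaseChange : Module A (S ⊗[R] M) where
  smul a z := secondFactorSMul (a := a) z
  one_smul z := by
    show secondFactorSMul (a := 1) z = z
    unfold secondFactorSMul
    rw [map_one]
    simp [Module.End.one_eq_id, LinearMap.lTensor_id]
  mul_smul a b z := by
    show secondFactorSMul (a := a * b) z
      = secondFactorSMul (a := a) (secondFactorSMul (a := b) z)
    unfold secondFactorSMul
    rw [map_mul, Module.End.mul_eq_comp, LinearMap.lTensor_comp, LinearMap.comp_apply]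
  smul_zero a := map_zero _
  smul_add a z w := map_add _ z w
  add_smul a b z := by
    show secondFactorSMul (a := a + b) z
      = secondFactorSMul (a := a) z + secondFactorSMul (a := b) z
    unfold secondFactorSMul
    rw [map_add, LinearMap.lTensor_add, LinearMap.add_apply]
  zero_smul z := by
    show secondFactorSMul (a := 0) z = 0
    unfold secondFactorSMul
    rw [map_zero, LinearMap.lTensor_zero, LinearMap.zero_apply]

lemma smul_tmul_baseChange (a : A) (s : S) (m : M) :
    a • (s ⊗ₜ[R] m : S ⊗[R] M) = s ⊗ₜ[R] (a • m) := rfl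

instance smulCommClass_baseChange : SMulCommClass A R (S ⊗[R] M) :=
  ⟨fun a r z => (secondFactorSMul (a := a) (S := S)).map_smul r z⟩

end BaseChangeAction

section CanonicalMap

variable {R A M : Type} [CommRing R] [Ring A] [Algebra R A]
variable [AddCommGroup M] [Module A M] [Module R M] [IsScalarTower R A M]
variable [SMulCommClass A R M] (x : R)

/-- For `f : End_A(M)` and `q : R/(x)`, the `A`-linear map `m ↦ q ⊗ f m`. -/
noncomputable def endTensorQuotAux (f : M →ₗ[A] M) (q : R ⧸ Ideal.span {x}) :
    M →ₗ[A] ((R ⧸ Ideal.span {x}) ⊗[R] M) where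
  toFun m := q ⊗ₜ[R] f m
  map_add' m m' := by simp [TensorProduct.tmul_add]
  map_smul' a m := by simp [smul_tmul_baseChange, map_smul]

/-- The canonical map `End_A(M) ⊗_R R/(x) → Hom_A(M, R/(x) ⊗_R M)` sending
`f ⊗ (r + (x))` to the map `m ↦ (r + (x)) ⊗ f m`. -/
noncomputable def endTensorQuotToHom :
    ((M →ₗ[A] M) ⊗[R] (R ⧸ Ideal.span {x})) →+
      (M →ₗ[A] ((R ⧸ Ideal.span {x}) ⊗[R] M)) :=
  TensorProduct.liftAddHom
    { toFun := fun f =>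
        { toFun := fun q => endTensorQuotAux x f q
          map_zero' := LinearMap.ext fun m => by simp [endTensorQuotAux]
          map_add' := fun q q' => LinearMap.ext fun m => by
            simp [endTensorQuotAux, TensorProduct.add_tmul] <;> rfl }
      map_zero' := AddMonoidHom.ext fun q => LinearMap.ext fun m => by
        simp [endTensorQuotAux]
      map_add' := fun f g => AddMonoidHom.ext fun q => LinearMap.ext fun m => by
        simp [endTensorQuotAux, TensorProduct.tmul_add] <;> rfl }
    (fun r f q => LinearMap.ext fun m => by
      simp [endTensorQuotAux, TensorProduct.tmul_smul, TensorProduct.smul_tmul'] <;> rfl)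

end CanonicalMap

/-!
After base change along `R → R/(x)`, every element of `End_A(M) ⊗_R R/(x)` has the form `f ⊗ 1`.
If `f ⊗ 1` maps to zero, then `1 ⊗ f m = 0` in `R/(x) ⊗_R M ≅ M/xM` for every `m`, so `f` takes
values in `xM`. Since `x` is a non-zero-divisor and `M` is projective, hence flat, multiplication
by `x` is injective on `M`, so `f = x • g` for an `A`-linear `g`, and `f ⊗ 1 = g ⊗ x • 1 = 0`.
-/

section QuotientTensor

variable {R N : Type*} [CommRing R] [AddCommGroup N] [Module R N]

theorem TensorProduct.exists_eq_tmul_one (I : Ideal R) (z : N ⊗[R] (R ⧸ I)) :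
    ∃ n : N, z = n ⊗ₜ[R] (1 : R ⧸ I) := by
  obtain ⟨n, hn⟩ := Submodule.Quotient.mk_surjective _ (tensorQuotEquivQuotSMul N I z)
  exact ⟨n, by rw [← tensorQuotEquivQuotSMul_symm_mk, hn, LinearEquiv.symm_apply_apply]⟩

theorem TensorProduct.one_tmul_eq_zero_iff_exists_smul_eq (x : R) (n : N) :
    (1 : R ⧸ Ideal.span {x}) ⊗ₜ[R] n = 0 ↔ ∃ n' : N, x • n' = n := by
  rw [← (quotTensorEquivQuotSMul N (Ideal.span {x})).map_eq_zero_iff,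
    quotTensorEquivQuotSMul_mk_one_tmul, Submodule.Quotient.mk_eq_zero,
    Submodule.ideal_span_singleton_smul, Submodule.mem_smul_pointwise_iff_exists]
  simp only [Submodule.mem_top, true_and]

end QuotientTensor

section DivisionBySMulRegular

variable {R A M N : Type*} [CommRing R] [Ring A]
  [AddCommGroup M] [Module A M] [AddCommGroup N] [Module A N] [Module R N] [SMulCommClass A R N]

theorem LinearMap.exists_eq_smul_of_isSMulRegular {x : R} (hx : IsSMulRegular N x)
    (f : M →ₗ[A] N) (hf : ∀ m, ∃ n, x • n = f m) : ∃ g : M →ₗ[A] N, f = x • g := by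
  let φ : N →ₗ[A] N := x • LinearMap.id
  let e := LinearEquiv.ofInjective φ hx
  refine ⟨e.symm.toLinearMap ∘ₗ f.codRestrict (LinearMap.range φ) hf, LinearMap.ext fun m => ?_⟩
  exact congrArg Subtype.val (e.apply_symm_apply ⟨f m, hf m⟩).symm

end DivisionBySMulRegular

section EndTensorQuot

variable {R A M : Type} [CommRing R] [Ring A]
  [AddCommGroup M] [Module A M] [Module R M] [SMulCommClass A R M]

theorem endTensorQuotToHom_tmul_apply (x : R) (f : M →ₗ[A] M) (q : R ⧸ Ideal.span {x}) (m : M) :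
    endTensorQuotToHom x (f ⊗ₜ[R] q) m = q ⊗ₜ[R] f m :=
  rfl

theorem endTensorQuotToHom_injective_of_isSMulRegular {x : R} (hx : IsSMulRegular M x) :
    Function.Injective (endTensorQuotToHom (A := A) (M := M) x) := by
  refine (injective_iff_map_eq_zero _).mpr fun z hz => ?_
  obtain ⟨f, rfl⟩ := TensorProduct.exists_eq_tmul_one _ z
  have hf : ∀ m, ∃ m', x • m' = f m := fun m =>
    (TensorProduct.one_tmul_eq_zero_iff_exists_smul_eq x (f m)).mp
      (by rw [← endTensorQuotToHom_tmul_apply, hz, LinearMap.zero_apply])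
  obtain ⟨g, rfl⟩ := f.exists_eq_smul_of_isSMulRegular hx hf
  rw [TensorProduct.smul_tmul, Algebra.smul_def, mul_one, Ideal.Quotient.algebraMap_eq,
    Ideal.Quotient.mk_singleton_self, TensorProduct.tmul_zero]

end EndTensorQuot

theorem endTensorQuotToHom_injective_general
    (R : Type) [CommRing R] (x : R) (hx : ∀ r : R, x * r = 0 → r = 0)
    (A : Type) [Ring A]
    (M : Type) [AddCommGroup M] [Module A M] [Module R M]
    [SMulCommClass A R M] [Module.Projective R M] :
    Function.Injective (endTensorQuotToHom (R := R) (A := A) (M := M) x) :=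
  endTensorQuotToHom_injective_of_isSMulRegular <|
    Module.Flat.isSMulRegular_of_nonZeroDivisors (mem_nonZeroDivisors_iff_left.mpr hx)

/-- Let `R` be a commutative ring, `x ∈ R` a non-zero divisor, `A` an
`R`-algebra, and `M` a left `A`-module that is projective over `R`.  Then the canonical
map `End_A(M) ⊗_R R/(x) → Hom_A(M, R/(x) ⊗_R M)`, `f ⊗ (r + (x)) ↦ (m ↦ (r + (x)) ⊗ f m)`,
is injective. -/
theorem endTensorQuotToHom_injective
    (R : Type) [CommRing R] (x : R) (hx : ∀ r : R, x * r = 0 → r = 0)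
    (A : Type) [Ring A] [Algebra R A]
    (M : Type) [AddCommGroup M] [Module A M] [Module R M] [IsScalarTower R A M]
    [SMulCommClass A R M] [Module.Projective R M] :
    Function.Injective (endTensorQuotToHom (R := R) (A := A) (M := M) x) :=
  endTensorQuotToHom_injective_general R x hx A M
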